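/- arXiv:1209.1123 — 2 statements merged into one kernel-verified Lean document; each statement's English description precedes it below -/
import Mathlib

section
/- (Proposition 1.) Let (M, N, M̃, Ñ, X, Y, X̃, Ỹ) be a DCF of the strictly proper plant G ∈ F^{m×p} over Ω, and let Q ∈ 𝔸^{p×m} be stable. Then Y_Q is invertible over F, I + G·K_Q is invertible over F, and M·X_Q = K_Q·(I + G·K_Q)⁻¹ = X̃_Q·M̃, where K_Q = Y_Q⁻¹·X_Q. -/
/-!
Reading the Bézout identity blockwise gives `(Y_Q + X_Q G) M = I`. Rational functions of
nonpositive degree form the valuation ring of the valuation at infinity, and the strictly proper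
ones its maximal ideal. As `M` is proper, `det (Y_Q + X_Q G)` has valuation at least `1`, while
`X_Q G` is strictly proper, so `det Y_Q` is congruent to it modulo the maximal ideal and hence
nonzero. Then `I + K_Q G = Y_Q⁻¹ (Y_Q + X_Q G)` has inverse `M Y_Q`, and the push-through identity
`K (I + G K)⁻¹ = (I + K G)⁻¹ K` gives `K_Q (I + G K_Q)⁻¹ = M X_Q`, which is `X̃_Q M̃` because
`M X = X̃ M̃`.
-/

open Matrix

noncomputable section

/-- The field of real rational functions. -/
abbrev F : Type := RatFunc ℝ

/-- A rational function is stable (w.r.t. stability region `Ω`) if it is proper and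
every complex root of the complexification of its reduced denominator lies in `Ω`. -/
def StableF (Ω : Set ℂ) (f : F) : Prop :=
  f.intDegree ≤ 0 ∧ ∀ z : ℂ, (f.denom.map (algebraMap ℝ ℂ)).IsRoot z → z ∈ Ω

/-- A matrix over `F` is stable if all its entries are stable. -/
def MatStable (Ω : Set ℂ) {a b : Type} (M : Matrix a b F) : Prop :=
  ∀ i j, StableF Ω (M i j)

/-- A matrix over `F` is strictly proper if every entry is `0` or has negative `intDegree`. -/
def StrictlyProper {a b : Type} (G : Matrix a b F) : Prop :=
  ∀ i j, G i j = 0 ∨ (G i j).intDegree < 0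

/-- A matrix over `F` is proper if every entry has nonpositive `intDegree`. -/
def ProperM {a b : Type} (K : Matrix a b F) : Prop :=
  ∀ i j, (K i j).intDegree ≤ 0

/-- `K` stabilizes `G` if `I + G*K` is invertible and the four closed-loop
transfer matrices are stable. -/
def Stabilizes (Ω : Set ℂ) {m p : ℕ} (G : Matrix (Fin m) (Fin p) F)
    (K : Matrix (Fin p) (Fin m) F) : Prop :=
  IsUnit (1 + G * K).det ∧
    MatStable Ω (1 + G * K)⁻¹ ∧
    MatStable Ω ((1 + G * K)⁻¹ * G) ∧
    MatStable Ω (K * (1 + G * K)⁻¹) ∧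
    MatStable Ω (1 + K * G)⁻¹

/-- A doubly coprime factorization of `G` over `Ω`. -/
structure IsDCF (Ω : Set ℂ) {m p : ℕ} (G : Matrix (Fin m) (Fin p) F)
    (M : Matrix (Fin p) (Fin p) F) (N : Matrix (Fin m) (Fin p) F)
    (Mt : Matrix (Fin m) (Fin m) F) (Nt : Matrix (Fin m) (Fin p) F)
    (X : Matrix (Fin p) (Fin m) F) (Y : Matrix (Fin p) (Fin p) F)
    (Xt : Matrix (Fin p) (Fin m) F) (Yt : Matrix (Fin m) (Fin m) F) : Prop where
  stM : MatStable Ω M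
  stN : MatStable Ω N
  stMt : MatStable Ω Mt
  stNt : MatStable Ω Nt
  stX : MatStable Ω X
  stY : MatStable Ω Y
  stXt : MatStable Ω Xt
  stYt : MatStable Ω Yt
  hM : IsUnit M.det
  hMt : IsUnit Mt.det
  hLeft : G = Mt⁻¹ * Nt
  hRight : G = N * M⁻¹
  bezout : Matrix.fromBlocks Y X (-Nt) Mt * Matrix.fromBlocks M (-Xt) N Yt = 1

/-- A left coprime factorization of `G` over `Ω`. -/
def IsLCF (Ω : Set ℂ) {m p : ℕ} (G : Matrix (Fin m) (Fin p) F)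
    (Mt : Matrix (Fin m) (Fin m) F) (Nt : Matrix (Fin m) (Fin p) F) : Prop :=
  MatStable Ω Mt ∧ MatStable Ω Nt ∧ IsUnit Mt.det ∧ G = Mt⁻¹ * Nt ∧
    ∃ Xt : Matrix (Fin p) (Fin m) F, ∃ Yt : Matrix (Fin m) (Fin m) F,
      MatStable Ω Xt ∧ MatStable Ω Yt ∧ Nt * Xt + Mt * Yt = 1

/-- A right coprime factorization of `G` over `Ω`. -/
def IsRCF (Ω : Set ℂ) {m p : ℕ} (G : Matrix (Fin m) (Fin p) F)
    (N : Matrix (Fin m) (Fin p) F) (M : Matrix (Fin p) (Fin p) F) : Prop :=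
  MatStable Ω N ∧ MatStable Ω M ∧ IsUnit M.det ∧ G = N * M⁻¹ ∧
    ∃ X : Matrix (Fin p) (Fin m) F, ∃ Y : Matrix (Fin p) (Fin p) F,
      MatStable Ω X ∧ MatStable Ω Y ∧ Y * M + X * N = 1

/-- Evaluation of a rational function at a complex point (complexified num/denom). -/
def evalC (z : ℂ) (f : F) : ℂ :=
  (f.num.map (algebraMap ℝ ℂ)).eval z / (f.denom.map (algebraMap ℝ ℂ)).eval z

namespace Valuation

variable {R Γ₀ : Type*} [CommRing R] [LinearOrderedCommGroupWithZero Γ₀] (v : Valuation R Γ₀)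

theorem map_matrix_mul_apply_le_one {l m o : Type*} [Fintype m] {A : Matrix l m R}
    {B : Matrix m o R} (hA : ∀ i k, v (A i k) ≤ 1) (hB : ∀ k j, v (B k j) ≤ 1) (i : l) (j : o) :
    v ((A * B) i j) ≤ 1 :=
  v.map_sum_le fun k _ => (v.map_mul _ _).trans_le (mul_le_one' (hA i k) (hB k j))

theorem map_matrix_mul_apply_lt_one {l m o : Type*} [Fintype m] {A : Matrix l m R}
    {B : Matrix m o R} (hA : ∀ i k, v (A i k) ≤ 1) (hB : ∀ k j, v (B k j) < 1) (i : l) (j : o) :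
    v ((A * B) i j) < 1 :=
  v.map_sum_lt one_ne_zero fun k _ =>
    (v.map_mul _ _).trans_lt ((mul_le_of_le_one_left' (hA i k)).trans_lt (hB k j))

variable {n : Type*} [Fintype n] [DecidableEq n]

theorem map_det_le_one {A : Matrix n n R} (hA : ∀ i j, v (A i j) ≤ 1) : v A.det ≤ 1 := by
  let A' : Matrix n n v.integer := fun i j => ⟨A i j, hA i j⟩
  have hdet : A.det = v.integer.subtype A'.det := by rw [RingHom.map_det]; rfl
  exact hdet ▸ A'.det.2

/-- Entrywise, `A + B ≡ A` modulo the ideal `{v < 1}` of the valuation ring, hence so are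
their determinants. -/
theorem map_det_add_sub_det_lt_one {A B : Matrix n n R} (hA : ∀ i j, v (A i j) ≤ 1)
    (hB : ∀ i j, v (B i j) < 1) : v ((A + B).det - A.det) < 1 := by
  let A' : Matrix n n v.integer := fun i j => ⟨A i j, hA i j⟩
  let B' : Matrix n n v.integer := fun i j => ⟨B i j, (hB i j).le⟩
  have hmod : Ideal.Quotient.mk (ltIdeal v 1) (A' + B').det =
      Ideal.Quotient.mk (ltIdeal v 1) A'.det := by
    rw [RingHom.map_det, RingHom.map_det]
    congr 1
    ext i j
    simpa using Ideal.Quotient.eq_zero_iff_mem.2 (hB i j)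
  have hdet : (A + B).det - A.det = v.integer.subtype ((A' + B').det - A'.det) := by
    rw [_root_.map_sub, RingHom.map_det, RingHom.map_det]; rfl
  exact hdet ▸ Ideal.Quotient.eq.1 hmod

theorem isUnit_det_of_add_mul_eq_one {K : Type*} [Field K] (v : Valuation K Γ₀)
    {A B M : Matrix n n K} (hA : ∀ i j, v (A i j) ≤ 1) (hB : ∀ i j, v (B i j) < 1)
    (hM : ∀ i j, v (M i j) ≤ 1) (h : (A + B) * M = 1) : IsUnit A.det := by
  have hsum : 1 ≤ v (A + B).det := by
    have hprod : v (A + B).det * v M.det = 1 := by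
      rw [← _root_.map_mul, ← det_mul, h, det_one, _root_.map_one]
    calc 1 = v (A + B).det * v M.det := hprod.symm
      _ ≤ v (A + B).det := mul_le_of_le_one_right' (v.map_det_le_one hM)
  have hA_eq : v A.det = v (A + B).det := by
    simpa using v.map_sub_eq_of_lt_left ((v.map_det_add_sub_det_lt_one hA hB).trans_le hsum)
  refine isUnit_iff_ne_zero.2 fun h0 => ?_
  rw [h0, map_zero] at hA_eq
  exact zero_lt_one.not_ge (hA_eq ▸ hsum)

end Valuation

namespace RatFunc

variable {K : Type*} [Field K] [DecidableEq (RatFunc K)]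

theorem inftyValuation_le_one_iff {f : RatFunc K} :
    inftyValuation K f ≤ 1 ↔ f.intDegree ≤ 0 := by
  rcases eq_or_ne f 0 with rfl | hf
  · simp
  · rw [inftyValuation_apply, inftyValuation_of_nonzero _ hf, ← WithZero.exp_zero,
      WithZero.exp_le_exp]

theorem inftyValuation_lt_one_iff {f : RatFunc K} :
    inftyValuation K f < 1 ↔ f = 0 ∨ f.intDegree < 0 := by
  rcases eq_or_ne f 0 with rfl | hf
  · simp
  · rw [inftyValuation_apply, inftyValuation_of_nonzero _ hf, ← WithZero.exp_zero,
      WithZero.exp_lt_exp, or_iff_right hf]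

end RatFunc

namespace Matrix

variable {R : Type*} [CommRing R] {m n : Type*} [Fintype m] [Fintype n] [DecidableEq n]

/-- The push-through identity; it needs no invertibility hypothesis because
`det (1 + A * B) = det (1 + B * A)`, so either both inverses are genuine or both are `0`. -/
theorem mul_inv_one_add_mul_comm [DecidableEq m] (A : Matrix m n R) (B : Matrix n m R) :
    A * (1 + B * A)⁻¹ = (1 + A * B)⁻¹ * A := by
  by_cases hBA : IsUnit (1 + B * A).det
  · have hAB : IsUnit (1 + A * B).det := by rwa [det_one_add_mul_comm]
    have hcomm : (1 + A * B) * A = A * (1 + B * A) := by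
      rw [Matrix.add_mul, Matrix.mul_add, Matrix.one_mul, Matrix.mul_one, Matrix.mul_assoc]
    calc A * (1 + B * A)⁻¹ = (1 + A * B)⁻¹ * ((1 + A * B) * A) * (1 + B * A)⁻¹ := by
          rw [nonsing_inv_mul_cancel_left _ _ hAB]
      _ = (1 + A * B)⁻¹ * (A * (1 + B * A)) * (1 + B * A)⁻¹ := by
          rw [hcomm]
      _ = (1 + A * B)⁻¹ * A := by
          rw [Matrix.mul_assoc, mul_nonsing_inv_cancel_right _ _ hBA]
  · have hAB : ¬IsUnit (1 + A * B).det := by rwa [det_one_add_mul_comm]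
    rw [nonsing_inv_apply_not_isUnit _ hBA, nonsing_inv_apply_not_isUnit _ hAB,
      Matrix.mul_zero, Matrix.zero_mul]

variable {Y M : Matrix n n R} {X : Matrix n m R} {G : Matrix m n R}

theorem one_add_inv_mul_mul_mul_eq_one (hY : IsUnit Y.det) (h : (Y + X * G) * M = 1) :
    (1 + Y⁻¹ * X * G) * (M * Y) = 1 := by
  calc (1 + Y⁻¹ * X * G) * (M * Y) = Y⁻¹ * ((Y + X * G) * M * Y) := by
        simp only [Matrix.add_mul, Matrix.mul_add, Matrix.one_mul, Matrix.mul_assoc,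
          nonsing_inv_mul_cancel_left _ _ hY]
    _ = 1 := by rw [h, Matrix.one_mul, nonsing_inv_mul _ hY]

theorem isUnit_det_one_add_mul_inv_mul [DecidableEq m] (hY : IsUnit Y.det)
    (h : (Y + X * G) * M = 1) :
    IsUnit (1 + G * (Y⁻¹ * X)).det := by
  rw [det_one_add_mul_comm]
  exact isUnit_det_of_right_inverse (one_add_inv_mul_mul_mul_eq_one hY h)

theorem inv_mul_mul_inv_one_add_mul [DecidableEq m] (hY : IsUnit Y.det)
    (h : (Y + X * G) * M = 1) :
    Y⁻¹ * X * (1 + G * (Y⁻¹ * X))⁻¹ = M * X := by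
  rw [mul_inv_one_add_mul_comm, ← Matrix.mul_assoc,
    inv_eq_right_inv (one_add_inv_mul_mul_mul_eq_one hY h), Matrix.mul_assoc,
    Matrix.mul_assoc, mul_nonsing_inv_cancel_left _ _ hY]

end Matrix

theorem MatStable.inftyValuation_le_one [DecidableEq F] {Ω : Set ℂ} {a b : Type}
    {A : Matrix a b F} (hA : MatStable Ω A) (i : a) (j : b) :
    RatFunc.inftyValuation ℝ (A i j) ≤ 1 :=
  RatFunc.inftyValuation_le_one_iff.2 (hA i j).1

theorem StrictlyProper.inftyValuation_lt_one [DecidableEq F] {a b : Type} {G : Matrix a b F}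
    (hG : StrictlyProper G) (i : a) (j : b) : RatFunc.inftyValuation ℝ (G i j) < 1 :=
  RatFunc.inftyValuation_lt_one_iff.2 (hG i j)

namespace IsDCF

variable {Ω : Set ℂ} {m p : ℕ} {G : Matrix (Fin m) (Fin p) F} {M : Matrix (Fin p) (Fin p) F}
  {N : Matrix (Fin m) (Fin p) F} {Mt : Matrix (Fin m) (Fin m) F} {Nt : Matrix (Fin m) (Fin p) F}
  {X : Matrix (Fin p) (Fin m) F} {Y : Matrix (Fin p) (Fin p) F} {Xt : Matrix (Fin p) (Fin m) F}
  {Yt : Matrix (Fin m) (Fin m) F}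

theorem Y_mul_M_add_X_mul_N (h : IsDCF Ω G M N Mt Nt X Y Xt Yt) : Y * M + X * N = 1 := by
  simpa [fromBlocks_multiply, ← fromBlocks_one] using congrArg toBlocks₁₁ h.bezout

theorem Mt_mul_N (h : IsDCF Ω G M N Mt Nt X Y Xt Yt) : Mt * N = Nt * M := by
  simpa [fromBlocks_multiply, ← fromBlocks_one, neg_add_eq_zero, eq_comm] using
    congrArg toBlocks₂₁ h.bezout

theorem M_mul_X (h : IsDCF Ω G M N Mt Nt X Y Xt Yt) : M * X = Xt * Mt := by
  simpa [fromBlocks_multiply, ← fromBlocks_one, add_neg_eq_zero] using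
    congrArg toBlocks₁₂ (mul_eq_one_comm.1 h.bezout)

theorem youla_mul_M (h : IsDCF Ω G M N Mt Nt X Y Xt Yt) (Q : Matrix (Fin p) (Fin m) F) :
    (Y - Q * Nt + (X + Q * Mt) * G) * M = 1 := by
  have hGM : G * M = N := by rw [h.hRight, nonsing_inv_mul_cancel_right _ _ h.hM]
  calc (Y - Q * Nt + (X + Q * Mt) * G) * M = Y * M + X * N + Q * (Mt * N - Nt * M) := by
        simp only [Matrix.add_mul, Matrix.sub_mul, Matrix.mul_sub, Matrix.mul_assoc, hGM]
        abel
    _ = 1 := by rw [h.Y_mul_M_add_X_mul_N, h.Mt_mul_N, sub_self, Matrix.mul_zero, add_zero]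

theorem M_mul_youla (h : IsDCF Ω G M N Mt Nt X Y Xt Yt) (Q : Matrix (Fin p) (Fin m) F) :
    M * (X + Q * Mt) = (Xt + M * Q) * Mt := by
  rw [Matrix.mul_add, Matrix.add_mul, h.M_mul_X, Matrix.mul_assoc]

end IsDCF

/-- **Proposition 1.** For a DCF of the strictly proper plant `G` and stable `Q`,
`Y_Q` and `I + G·K_Q` are invertible and `M·X_Q = K_Q(I+G·K_Q)⁻¹ = X̃_Q·M̃`. -/
theorem prop_MXQ (Ω : Set ℂ) (m p : ℕ)
    (G : Matrix (Fin m) (Fin p) F) (hG : StrictlyProper G)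
    (M : Matrix (Fin p) (Fin p) F) (N : Matrix (Fin m) (Fin p) F)
    (Mt : Matrix (Fin m) (Fin m) F) (Nt : Matrix (Fin m) (Fin p) F)
    (X : Matrix (Fin p) (Fin m) F) (Y : Matrix (Fin p) (Fin p) F)
    (Xt : Matrix (Fin p) (Fin m) F) (Yt : Matrix (Fin m) (Fin m) F)
    (hDCF : IsDCF Ω G M N Mt Nt X Y Xt Yt)
    (Q : Matrix (Fin p) (Fin m) F) (hQ : MatStable Ω Q) :
    IsUnit (Y - Q * Nt).det ∧
    IsUnit (1 + G * ((Y - Q * Nt)⁻¹ * (X + Q * Mt))).det ∧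
    M * (X + Q * Mt) =
      ((Y - Q * Nt)⁻¹ * (X + Q * Mt)) *
        (1 + G * ((Y - Q * Nt)⁻¹ * (X + Q * Mt)))⁻¹ ∧
    (Xt + M * Q) * Mt =
      ((Y - Q * Nt)⁻¹ * (X + Q * Mt)) *
        (1 + G * ((Y - Q * Nt)⁻¹ * (X + Q * Mt)))⁻¹ := by
  classical
  let v := RatFunc.inftyValuation ℝ
  have hYoula := hDCF.youla_mul_M Q
  have hYQ : IsUnit (Y - Q * Nt).det := by
    refine v.isUnit_det_of_add_mul_eq_one (fun i j => ?_) (fun i j => ?_)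
      hDCF.stM.inftyValuation_le_one hYoula
    · exact v.map_sub_le (hDCF.stY.inftyValuation_le_one i j)
        (v.map_matrix_mul_apply_le_one hQ.inftyValuation_le_one
          hDCF.stNt.inftyValuation_le_one i j)
    · refine v.map_matrix_mul_apply_lt_one (fun i k => ?_) hG.inftyValuation_lt_one i j
      exact v.map_add_le (hDCF.stX.inftyValuation_le_one i k)
        (v.map_matrix_mul_apply_le_one hQ.inftyValuation_le_one
          hDCF.stMt.inftyValuation_le_one i k)
  have hK := Matrix.inv_mul_mul_inv_one_add_mul hYQ hYoula
  exact ⟨hYQ, Matrix.isUnit_det_one_add_mul_inv_mul hYQ hYoula, hK.symm,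
    (hDCF.M_mul_youla Q).symm.trans hK.symm⟩
end
end

section
/- (Theorem 2, Rotkowitz–Lall.) Let G ∈ F^{m×p} be strictly proper, let K^bin : Fin p → Fin m → Bool define the sparsity subspace S, and let S_prop denote the set of proper matrices belonging to S. Then S is quadratically invariant under G (i.e. K·G·K ∈ S for every K ∈ S) if and only if { K·(I + G·K)⁻¹ : K ∈ S_prop } = S_prop (note that I + G·K is invertible over F for every proper K, since G is strictly proper). -/
open Matrix

noncomputable section

/-!
Quadratic invariance polarizes to `K G Q + Q G K ∈ S` for `K, Q ∈ S`, which gives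
`K (G K)ⁿ ∈ S` for all `n`; by Cayley–Hamilton `(I + G K)⁻¹` is a polynomial in `G K`,
so `K (I + G K)⁻¹ ∈ S`, and `T ↦ T (I - G T)⁻¹` inverts the feedback map. Proper functions
form the valuation ring of the place at infinity, whose maximal ideal consists of the strictly
proper functions; so for strictly proper `G K` the determinant of `I + G K` is a unit there,
and properness is preserved.

Conversely, feedback invariance applied to `t K` for real `t ≠ 0` makes the entries of
`K adj(I + t G K)` outside the pattern vanish for infinitely many `t`, hence identically as
polynomials in `t`; their coefficient of `t` is `-(K G K)ᵢⱼ`. Multiplying by `λ⁻ᴺ` makes any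
`K` proper, which removes the properness assumption.
-/

open Polynomial

section Feedback

variable {k m p : Type*} [CommRing k] [Fintype m] [DecidableEq m] [Fintype p]

def feedback (G : Matrix m p k) (K : Matrix p m k) : Matrix p m k := K * (1 + G * K)⁻¹

theorem feedback_feedback_neg {G : Matrix m p k} {T : Matrix p m k}
    (hT : IsUnit (1 + -G * T).det) : feedback G (feedback (-G) T) = T := by
  set W := 1 + -G * T
  have hW : 1 + G * (T * W⁻¹) = W⁻¹ := by
    calc 1 + G * (T * W⁻¹) = (W + G * T) * W⁻¹ := by
          rw [Matrix.add_mul, Matrix.mul_nonsing_inv W hT, Matrix.mul_assoc]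
      _ = W⁻¹ := by simp [W]
  rw [feedback, feedback, hW, Matrix.nonsing_inv_nonsing_inv W hT, Matrix.mul_assoc,
    Matrix.nonsing_inv_mul W hT, Matrix.mul_one]

end Feedback

theorem Matrix.inv_mem_adjoin_singleton {k n : Type*} [CommRing k] [Fintype n] [DecidableEq n]
    (M : Matrix n n k) : M⁻¹ ∈ Algebra.adjoin k {M} := by
  by_cases hM : IsUnit M.det
  swap
  · rw [M.nonsing_inv_apply_not_isUnit hM]
    exact zero_mem _
  set c := M.charpoly.coeff 0
  have hc : IsUnit c := isUnit_of_mul_isUnit_right (M.det_eq_sign_charpoly_coeff ▸ hM)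
  -- Cayley–Hamilton: `M * q(M) = -c` where `χ_M = X * q + c`.
  have hCH : M * aeval M M.charpoly.divX = -algebraMap k _ c := by
    have := M.aeval_self_charpoly
    rw [← X_mul_divX_add M.charpoly, map_add, map_mul, aeval_X, aeval_C] at this
    exact eq_neg_of_add_eq_zero_left this
  have hinv : M * aeval M (C (-(↑hc.unit⁻¹ : k)) * M.charpoly.divX) = 1 := by
    rw [map_mul, aeval_C, ← Algebra.smul_def, Matrix.mul_smul, hCH, neg_smul, smul_neg, neg_neg,
      Algebra.smul_def, ← map_mul, IsUnit.val_inv_mul, map_one]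
  rw [Algebra.adjoin_singleton_eq_range_aeval, AlgHom.mem_range]
  exact ⟨_, (Matrix.inv_eq_right_inv hinv).symm⟩

section QuadraticInvariance

variable {k m p : Type*} [Field k] [Fintype m] [Fintype p]

def sparsitySubspace (Kbin : p → m → Bool) : Submodule k (Matrix p m k) where
  carrier := {K | ∀ i j, Kbin i j = false → K i j = 0}
  add_mem' hK hL i j h := by simp [hK i j h, hL i j h]
  zero_mem' _ _ _ := rfl
  smul_mem' c _ hK i j h := by simp [hK i j h]

def IsQuadInvariant (S : Submodule k (Matrix p m k)) (G : Matrix m p k) : Prop :=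
  ∀ K ∈ S, K * G * K ∈ S

namespace IsQuadInvariant

variable {S : Submodule k (Matrix p m k)} {G : Matrix m p k}

theorem neg (hS : IsQuadInvariant S G) : IsQuadInvariant S (-G) := fun K hK => by
  simpa [Matrix.mul_neg, Matrix.neg_mul] using S.neg_mem (hS K hK)

variable [DecidableEq m] [NeZero (2 : k)] {K : Matrix p m k}

theorem mul_pow_mem (hS : IsQuadInvariant S G) (hK : K ∈ S) (n : ℕ) :
    K * (G * K) ^ n ∈ S := by
  induction n with
  | zero => simpa using hK
  | succ n ih =>
    set Q := K * (G * K) ^ n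
    have hpolar : (K + Q) * G * (K + Q) - K * G * K - Q * G * Q =
        (2 : k) • (K * (G * K) ^ (n + 1)) := by
      have hKQ : K * G * Q = K * (G * K) ^ (n + 1) := by
        simp only [Q, pow_succ', Matrix.mul_assoc]
      have hQK : Q * G * K = K * (G * K) ^ (n + 1) := by
        simp only [Q, pow_succ, Matrix.mul_assoc]
      rw [two_smul, Matrix.add_mul, Matrix.add_mul, Matrix.mul_add, Matrix.mul_add, hKQ, hQK]
      abel
    refine (S.smul_mem_iff (two_ne_zero : (2 : k) ≠ 0)).1 ?_
    rw [← hpolar]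
    exact S.sub_mem (S.sub_mem (hS _ (S.add_mem hK ih)) (hS K hK)) (hS Q ih)

theorem mul_mem_of_mem_adjoin (hS : IsQuadInvariant S G) (hK : K ∈ S) {X : Matrix m m k}
    (hX : X ∈ Algebra.adjoin k {G * K}) : K * X ∈ S := by
  rw [Algebra.adjoin_singleton_eq_range_aeval, AlgHom.mem_range] at hX
  obtain ⟨r, rfl⟩ := hX
  rw [aeval_eq_sum_range, Matrix.mul_sum]
  exact S.sum_mem fun n _ => by
    rw [Matrix.mul_smul]
    exact S.smul_mem _ (hS.mul_pow_mem hK n)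

theorem feedback_mem (hS : IsQuadInvariant S G) (hK : K ∈ S) : feedback G K ∈ S := by
  refine hS.mul_mem_of_mem_adjoin hK (Algebra.adjoin_le ?_ (1 + G * K).inv_mem_adjoin_singleton)
  exact Set.singleton_subset_iff.2 (add_mem (one_mem _) (Algebra.self_mem_adjoin_singleton k _))

end IsQuadInvariant

theorem mul_adjugate_mem_of_feedback_smul_mem [DecidableEq m] {S : Submodule k (Matrix p m k)}
    {G : Matrix m p k} {K : Matrix p m k} {t : k} (ht : t ≠ 0)
    (hdet : IsUnit (1 + t • (G * K)).det)
    (hS : feedback G (t • K) ∈ S) : K * (1 + t • (G * K)).adjugate ∈ S := by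
  rw [feedback, Matrix.mul_smul, Matrix.smul_mul, S.smul_mem_iff ht] at hS
  set B := 1 + t • (G * K)
  have hadj : B.adjugate = B.det • B⁻¹ := by
    rw [Matrix.inv_def, smul_smul, Ring.mul_inverse_cancel _ hdet, one_smul]
  rw [hadj, Matrix.mul_smul]
  exact S.smul_mem _ hS

end QuadraticInvariance

theorem Matrix.det_one_add_sub_one_mem {R n : Type*} [CommRing R] [Fintype n] [DecidableEq n]
    {I : Ideal R} {A : Matrix n n R} (hA : ∀ i j, A i j ∈ I) : (1 + A).det - 1 ∈ I := by
  have hmod : (Ideal.Quotient.mk I).mapMatrix (1 + A) = 1 := by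
    ext i j
    simp [Matrix.one_apply, Ideal.Quotient.eq_zero_iff_mem.2 (hA i j)]
  rw [← Ideal.Quotient.eq, RingHom.map_det, hmod, Matrix.det_one, map_one]

namespace Valuation

variable {K Γ₀ n : Type*} [Field K] [LinearOrderedCommGroupWithZero Γ₀]
  (v : Valuation K Γ₀)

theorem mul_apply_le_one {p q : Type*} [Fintype q] {M : Matrix n q K} {N : Matrix q p K}
    (hM : ∀ i j, v (M i j) ≤ 1) (hN : ∀ i j, v (N i j) ≤ 1) (i : n) (j : p) :
    v ((M * N) i j) ≤ 1 :=
  v.map_sum_le fun l _ => by rw [map_mul]; exact mul_le_one' (hM i l) (hN l j)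

variable [Fintype n] [DecidableEq n]

theorem adjugate_apply_le_one {M : Matrix n n K} (hM : ∀ i j, v (M i j) ≤ 1) (i j : n) :
    v (M.adjugate i j) ≤ 1 := by
  let M' : Matrix n n v.valuationSubring := .of fun i j => ⟨M i j, hM i j⟩
  have hM' : M = v.valuationSubring.subtype.mapMatrix M' := rfl
  rw [hM', ← RingHom.map_adjugate]
  exact (M'.adjugate i j).2

theorem det_one_add_eq_one {A : Matrix n n K} (hA : ∀ i j, v (A i j) < 1) :
    v (1 + A).det = 1 := by
  let A' : Matrix n n v.valuationSubring := .of fun i j => ⟨A i j, (hA i j).le⟩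
  have hA' : 1 + A = v.valuationSubring.subtype.mapMatrix (1 + A') := by
    rw [map_add, map_one]; rfl
  have hdet : (1 + A').det - 1 ∈ IsLocalRing.maximalIdeal _ :=
    Matrix.det_one_add_sub_one_mem fun i j => (v.mem_maximalIdeal_iff K).2 (hA i j)
  rw [v.mem_maximalIdeal_iff K] at hdet
  rw [hA', ← RingHom.map_det]
  simpa using v.map_one_add_of_lt hdet

theorem inv_one_add_apply_le_one {A : Matrix n n K} (hA : ∀ i j, v (A i j) < 1) (i j : n) :
    v ((1 + A)⁻¹ i j) ≤ 1 := by
  rw [Matrix.inv_def, Matrix.smul_apply, smul_eq_mul, Ring.inverse_eq_inv', map_mul, map_inv₀,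
    v.det_one_add_eq_one hA, inv_one, one_mul]
  refine v.adjugate_apply_le_one (fun i j => (v.map_add _ _).trans (max_le ?_ (hA i j).le)) i j
  rw [Matrix.one_apply]
  split_ifs <;> simp

end Valuation

section AdjugatePolynomial

variable {k n p : Type*} [CommRing k] [Fintype n] [DecidableEq n]

theorem Matrix.map_eval_mul_adjugate (K : Matrix p n k) (A : Matrix n n k) (t : k) :
    (K.map C * (1 + (X : k[X]) • A.map C).adjugate).map (eval t) =
      K * (1 + t • A).adjugate := by
  have hB : (evalRingHom t).mapMatrix (1 + (X : k[X]) • A.map C) = 1 + t • A := by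
    ext i j
    simp only [RingHom.mapMatrix_apply, Matrix.map_apply, Matrix.add_apply, Matrix.smul_apply,
      smul_eq_mul, coe_evalRingHom, eval_add, eval_mul, eval_X, eval_C, Matrix.one_apply,
      apply_ite (eval t), eval_one, eval_zero]
  rw [← coe_evalRingHom, Matrix.map_mul, ← RingHom.mapMatrix_apply (evalRingHom t),
    RingHom.map_adjugate, hB]
  congr 1
  ext i j
  simp

theorem Matrix.mul_apply_eq_zero_of_mul_adjugate_apply_eq_zero [IsDomain k]
    {K : Matrix p n k} {A : Matrix n n k} {i : p} {j : n} (hK : K i j = 0)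
    (hT : {t : k | (K * (1 + t • A).adjugate) i j = 0}.Infinite) : (K * A) i j = 0 := by
  set B := 1 + (X : k[X]) • A.map C
  have hpoly : (K.map C * B.adjugate) i j = 0 :=
    eq_zero_of_infinite_isRoot _ (hT.mono fun t ht =>
      (congrFun₂ (K.map_eval_mul_adjugate A t) i j).trans ht)
  -- `B adj B = det B` turns `(K adj B)ᵢⱼ = 0` into `X (K A adj B)ᵢⱼ = 0`; then set `X = 0`.
  have hadj :
      K.map C * B.adjugate = B.det • K.map C - (X : k[X]) • ((K * A).map C * B.adjugate) := by
    have hBadj : B.adjugate = B.det • 1 - (X : k[X]) • (A.map C * B.adjugate) := by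
      rw [eq_sub_iff_add_eq, ← Matrix.mul_adjugate, Matrix.add_mul, Matrix.one_mul,
        Matrix.smul_mul]
    conv_lhs => rw [hBadj]
    rw [Matrix.mul_sub, Matrix.mul_smul, Matrix.mul_one, Matrix.mul_smul, Matrix.map_mul,
      Matrix.mul_assoc]
  rw [hadj] at hpoly
  have hzero : ((K * A).map C * B.adjugate) i j = 0 := by simpa [hK] using hpoly
  have := congrFun₂ ((K * A).map_eval_mul_adjugate A 0) i j
  rwa [Matrix.map_apply, hzero, eval_zero, zero_smul, add_zero, Matrix.adjugate_one,
    Matrix.mul_one, eq_comm] at this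

end AdjugatePolynomial

section Proper

open scoped Classical in
abbrev vInfty := RatFunc.inftyValuation ℝ

theorem vInfty_le_one_iff {f : F} : vInfty f ≤ 1 ↔ f.intDegree ≤ 0 := by
  classical
  rcases eq_or_ne f 0 with rfl | hf
  · simp
  · rw [RatFunc.inftyValuation_apply, RatFunc.inftyValuation_of_nonzero _ hf,
      ← WithZero.exp_zero, WithZero.exp_le_exp]

theorem vInfty_lt_one_iff {f : F} : vInfty f < 1 ↔ f = 0 ∨ f.intDegree < 0 := by
  classical
  rcases eq_or_ne f 0 with rfl | hf
  · simp
  · rw [RatFunc.inftyValuation_apply, RatFunc.inftyValuation_of_nonzero _ hf,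
      ← WithZero.exp_zero, WithZero.exp_lt_exp, or_iff_right hf]

variable {a b c : Type}

theorem properM_iff {K : Matrix a b F} : ProperM K ↔ ∀ i j, vInfty (K i j) ≤ 1 := by
  simp only [ProperM, vInfty_le_one_iff]

theorem strictlyProper_iff {G : Matrix a b F} :
    StrictlyProper G ↔ ∀ i j, vInfty (G i j) < 1 := by
  simp only [StrictlyProper, vInfty_lt_one_iff]

theorem ProperM.smul {K : Matrix a b F} (hK : ProperM K) {t : F} (ht : vInfty t ≤ 1) :
    ProperM (t • K) :=
  properM_iff.2 fun i j => by
    rw [Matrix.smul_apply, smul_eq_mul, map_mul]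
    exact mul_le_one' ht (properM_iff.1 hK i j)

theorem StrictlyProper.neg {G : Matrix a b F} (hG : StrictlyProper G) : StrictlyProper (-G) :=
  strictlyProper_iff.2 fun i j => by
    rw [Matrix.neg_apply, Valuation.map_neg]
    exact strictlyProper_iff.1 hG i j

theorem StrictlyProper.smul {G : Matrix a b F} (hG : StrictlyProper G) {t : F}
    (ht : vInfty t ≤ 1) : StrictlyProper (t • G) :=
  strictlyProper_iff.2 fun i j => by
    rw [Matrix.smul_apply, smul_eq_mul, map_mul, mul_comm]
    exact mul_lt_one_of_lt_of_le (strictlyProper_iff.1 hG i j) ht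

theorem StrictlyProper.mul_properM [Fintype b] {G : Matrix a b F} {K : Matrix b c F}
    (hG : StrictlyProper G) (hK : ProperM K) : StrictlyProper (G * K) :=
  strictlyProper_iff.2 fun i j => vInfty.map_sum_lt one_ne_zero fun l _ => by
    rw [map_mul]
    exact mul_lt_one_of_lt_of_le (strictlyProper_iff.1 hG i l) (properM_iff.1 hK l j)

theorem StrictlyProper.isUnit_det_one_add [Fintype a] [DecidableEq a] {A : Matrix a a F}
    (hA : StrictlyProper A) : IsUnit (1 + A).det :=
  isUnit_iff_ne_zero.2 fun h => by
    simpa [h] using vInfty.det_one_add_eq_one (strictlyProper_iff.1 hA)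

theorem ProperM.feedback [Fintype a] [DecidableEq a] [Fintype b] {G : Matrix a b F}
    {K : Matrix b a F} (hG : StrictlyProper G) (hK : ProperM K) : ProperM (feedback G K) :=
  properM_iff.2 <| vInfty.mul_apply_le_one (properM_iff.1 hK)
    (vInfty.inv_one_add_apply_le_one (strictlyProper_iff.1 (hG.mul_properM hK)))

theorem exists_smul_properM [Finite a] [Finite b] (K : Matrix a b F) :
    ∃ t : F, t ≠ 0 ∧ ProperM (t • K) := by
  classical
  obtain ⟨N, hN⟩ := Finite.exists_le fun ij : a × b => (K ij.1 ij.2).intDegree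
  refine ⟨RatFunc.X ^ (-N), zpow_ne_zero _ RatFunc.X_ne_zero, properM_iff.2 fun i j => ?_⟩
  rw [Matrix.smul_apply, smul_eq_mul, map_mul, RatFunc.inftyValuation.X_zpow]
  rcases eq_or_ne (K i j) 0 with h | h
  · simp [h]
  · rw [RatFunc.inftyValuation_apply, RatFunc.inftyValuation_of_nonzero _ h, ← WithZero.exp_add,
      ← WithZero.exp_zero, WithZero.exp_le_exp]
    linarith [hN (i, j)]

end Proper

theorem isQuadInvariant_of_properM {m p : Type} [Fintype m] [Fintype p]
    {S : Submodule F (Matrix p m F)} {G : Matrix m p F}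
    (h : ∀ K ∈ S, ProperM K → K * G * K ∈ S) : IsQuadInvariant S G := by
  intro K hK
  obtain ⟨t, ht, htK⟩ := exists_smul_properM K
  have := h _ (S.smul_mem t hK) htK
  rwa [Matrix.smul_mul, Matrix.smul_mul, Matrix.mul_smul, smul_smul,
    S.smul_mem_iff (mul_ne_zero ht ht)] at this

theorem mul_mul_mem_of_feedback_mem {m p : Type} [Fintype m] [DecidableEq m] [Fintype p]
    {G : Matrix m p F} (hG : StrictlyProper G) {Kbin : p → m → Bool}
    (h : ∀ K ∈ sparsitySubspace Kbin, ProperM K → feedback G K ∈ sparsitySubspace Kbin)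
    {K : Matrix p m F} (hK : K ∈ sparsitySubspace Kbin) (hKp : ProperM K) :
    K * G * K ∈ sparsitySubspace Kbin := by
  intro i j hij
  rw [Matrix.mul_assoc]
  refine Matrix.mul_apply_eq_zero_of_mul_adjugate_apply_eq_zero (hK i j hij) <|
    ((Set.finite_singleton (0 : ℝ)).infinite_compl.image
      (algebraMap ℝ F).injective.injOn).mono ?_
  rintro _ ⟨c, hc, rfl⟩
  have ht : vInfty (algebraMap ℝ F c) ≤ 1 :=
    Valuation.IsTrivialOn.valuation_algebraMap_le_one _ c
  exact mul_adjugate_mem_of_feedback_smul_mem ((_root_.map_ne_zero _).2 hc)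
    ((hG.mul_properM hKp).smul ht).isUnit_det_one_add
    (h _ (Submodule.smul_mem _ _ hK) (hKp.smul ht)) i j hij

/-- **Theorem 2 (Rotkowitz–Lall).** For a strictly proper plant `G` and sparsity subspace `S`
given by `Kbin`, `S` is quadratically invariant under `G` iff the feedback transformation
`K ↦ K(I+GK)⁻¹` maps the set of proper elements of `S` onto itself. -/
theorem quadratic_invariance_iff_feedback_invariance (m p : ℕ)
    (G : Matrix (Fin m) (Fin p) F) (hG : StrictlyProper G)
    (Kbin : Fin p → Fin m → Bool) :
    (∀ K : Matrix (Fin p) (Fin m) F,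
        (∀ i j, Kbin i j = false → K i j = 0) →
        (∀ i j, Kbin i j = false → (K * G * K) i j = 0)) ↔
    ((fun K : Matrix (Fin p) (Fin m) F => K * (1 + G * K)⁻¹) ''
        {K | (∀ i j, Kbin i j = false → K i j = 0) ∧ ProperM K} =
      {K | (∀ i j, Kbin i j = false → K i j = 0) ∧ ProperM K}) := by
  change IsQuadInvariant (sparsitySubspace Kbin) G ↔
    feedback G '' {K | K ∈ sparsitySubspace Kbin ∧ ProperM K} =
      {K | K ∈ sparsitySubspace Kbin ∧ ProperM K}
  constructor
  · intro hQI
    refine Set.Subset.antisymm ?_ fun T ⟨hT, hTp⟩ => ?_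
    · rintro _ ⟨K, ⟨hK, hKp⟩, rfl⟩
      exact ⟨hQI.feedback_mem hK, hKp.feedback hG⟩
    · exact ⟨feedback (-G) T, ⟨hQI.neg.feedback_mem hT, hTp.feedback hG.neg⟩,
        feedback_feedback_neg (hG.neg.mul_properM hTp).isUnit_det_one_add⟩
  · intro hfb
    refine isQuadInvariant_of_properM fun K hK hKp =>
      mul_mul_mem_of_feedback_mem hG (fun K hK hKp => ?_) hK hKp
    exact (hfb.subset ⟨K, ⟨hK, hKp⟩, rfl⟩).1
end
end
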